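/- Let k ∈ (−2,2) and let (x₀,y₀,z₀) ∈ E_k. If the Γ-orbit {g(x₀,y₀,z₀) : g ∈ Γ} is an infinite set, then it is dense in E_k: every point of E_k is in its closure. -/

import Mathlib

/-- `κ(x,y,z) = x² + y² + z² − xyz − 2`. -/
def kappa (p : ℝ × ℝ × ℝ) : ℝ :=
  p.1 ^ 2 + p.2.1 ^ 2 + p.2.2 ^ 2 - p.1 * p.2.1 * p.2.2 - 2

/-- The level set `E_k = {(x,y,z) ∈ [−2,2]³ : κ(x,y,z) = k}`. -/
def Ek (k : ℝ) : Set (ℝ × ℝ × ℝ) :=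
  {p | p.1 ∈ Set.Icc (-2 : ℝ) 2 ∧ p.2.1 ∈ Set.Icc (-2 : ℝ) 2 ∧ p.2.2 ∈ Set.Icc (-2 : ℝ) 2 ∧
    kappa p = k}

/-- The Dehn twist `τ_X(x,y,z) = (x, z, xz − y)`, as a bijection of `ℝ³`. -/
def tauX : Equiv.Perm (ℝ × ℝ × ℝ) where
  toFun p := (p.1, p.2.2, p.1 * p.2.2 - p.2.1)
  invFun p := (p.1, p.1 * p.2.1 - p.2.2, p.2.1)
  left_inv := by rintro ⟨x, y, z⟩; exact Prod.ext rfl (Prod.ext (by dsimp; ring) rfl)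
  right_inv := by rintro ⟨x, y, z⟩; exact Prod.ext rfl (Prod.ext rfl (by dsimp; ring))

/-- The Dehn twist `τ_Y(x,y,z) = (z, y, yz − x)`, as a bijection of `ℝ³`. -/
def tauY : Equiv.Perm (ℝ × ℝ × ℝ) where
  toFun p := (p.2.2, p.2.1, p.2.1 * p.2.2 - p.1)
  invFun p := (p.1 * p.2.1 - p.2.2, p.2.1, p.1)
  left_inv := by rintro ⟨x, y, z⟩; exact Prod.ext (by dsimp; ring) (Prod.ext rfl rfl)
  right_inv := by rintro ⟨x, y, z⟩; exact Prod.ext rfl (Prod.ext rfl (by dsimp; ring))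

/-- `Γ`: the group of bijections of `ℝ³` generated by `τ_X` and `τ_Y`. -/
def Gamma : Subgroup (Equiv.Perm (ℝ × ℝ × ℝ)) := Subgroup.closure {tauX, tauY}

/-- The `Γ`-orbit of a point of `ℝ³`. -/
def gammaOrbit (p : ℝ × ℝ × ℝ) : Set (ℝ × ℝ × ℝ) := {q | ∃ g ∈ Gamma, g p = q}

/-!
On a slice `x = a` of `E_k` (with `a² < k + 2`) the twist `τ_X` is conjugate to the rotation of
a circle by the angle `arccos (a / 2)`. Let `K` be the orbit closure, a compact `Γ`-invariant
set. If `a` is a non-isolated `x`-coordinate of a point of `K`, then `K` contains the whole slice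
`x = a`: when `arccos (a / 2) / 2π` is irrational the rotation orbits are dense, and when it
equals `M / N` the `N`-th power of `τ_X` rotates the nearby slices `x = b` by
`N arccos (b / 2) ≡ N (arccos (b / 2) - arccos (a / 2))` modulo `2π`, a small nonzero angle.
A full slice `x = a` meets every `y`-slice with `|y|` below its radius, and these are
non-isolated `y`-coordinates, so by the same argument with `x` and `y` exchanged `K` contains
those `y`-slices; the `y`-slice at `0` in turn sweeps out all `x`-slices, i.e. all of `E_k`.
Finally, an infinite `K` has an accumulation point, and since a point of `E_k` is determined by
`(x, y)` up to the involution `z ↦ xy - z`, its `x`- or `y`-coordinate is non-isolated; applying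
`τ_X` or `τ_Y` first avoids the one-point slices `x² = k + 2` and `y² = k + 2`.
-/

open Set Filter Topology
open scoped Real

lemma kappa_add_two_sub_sq_fst (p : ℝ × ℝ × ℝ) :
    kappa p + 2 - p.1 ^ 2 = (p.2.2 - p.1 * p.2.1 / 2) ^ 2 + (1 - p.1 ^ 2 / 4) * p.2.1 ^ 2 := by
  unfold kappa; ring

lemma sq_fst_le_of_mem_Ek {k : ℝ} {p : ℝ × ℝ × ℝ} (hp : p ∈ Ek k) : p.1 ^ 2 ≤ k + 2 := by
  obtain ⟨⟨hx₁, hx₂⟩, -, -, hκ⟩ := hp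
  have h4 : 0 ≤ 1 - p.1 ^ 2 / 4 := by nlinarith
  nlinarith [kappa_add_two_sub_sq_fst p, sq_nonneg (p.2.2 - p.1 * p.2.1 / 2),
    mul_nonneg h4 (sq_nonneg p.2.1)]

lemma mem_Icc_of_mul_sq_le {c w r : ℝ} (hc : 0 < c) (h : c * w ^ 2 ≤ r) (hr : r < 4 * c) :
    w ∈ Icc (-2 : ℝ) 2 := by
  have : w ^ 2 < 2 ^ 2 := by nlinarith
  exact ⟨by nlinarith, by nlinarith⟩

lemma mem_Ek_iff_of_lt_two {k : ℝ} (hk : k < 2) {p : ℝ × ℝ × ℝ} :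
    p ∈ Ek k ↔ p.1 ^ 2 < 4 ∧ kappa p = k := by
  refine ⟨fun hp ↦ ⟨by linarith [sq_fst_le_of_mem_Ek hp], hp.2.2.2⟩, fun ⟨hx, hκ⟩ ↦ ?_⟩
  have hc : 0 < 1 - p.1 ^ 2 / 4 := by linarith
  have hr : kappa p + 2 - p.1 ^ 2 < 4 * (1 - p.1 ^ 2 / 4) := by linarith
  have hy := kappa_add_two_sub_sq_fst p
  have hz : kappa p + 2 - p.1 ^ 2 =
      (p.2.1 - p.1 * p.2.2 / 2) ^ 2 + (1 - p.1 ^ 2 / 4) * p.2.2 ^ 2 := by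
    unfold kappa; ring
  refine ⟨⟨by nlinarith, by nlinarith⟩, mem_Icc_of_mul_sq_le hc ?_ hr,
    mem_Icc_of_mul_sq_le hc ?_ hr, hκ⟩
  · nlinarith [sq_nonneg (p.2.2 - p.1 * p.2.1 / 2)]
  · nlinarith [sq_nonneg (p.2.1 - p.1 * p.2.2 / 2)]

lemma snd_eq_zero_and_snd_snd_eq_zero {k : ℝ} (hk : k < 2) {p : ℝ × ℝ × ℝ} (hp : p ∈ Ek k)
    (hp₁ : k + 2 ≤ p.1 ^ 2) : p.2.1 = 0 ∧ p.2.2 = 0 := by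
  have hc : 0 < 1 - p.1 ^ 2 / 4 := by linarith [((mem_Ek_iff_of_lt_two hk).1 hp).1]
  have hid := kappa_add_two_sub_sq_fst p
  rw [hp.2.2.2] at hid
  have hy : p.2.1 = 0 := by
    by_contra hy
    nlinarith [sq_nonneg (p.2.2 - p.1 * p.2.1 / 2), mul_pos hc (sq_pos_of_ne_zero hy)]
  refine ⟨hy, pow_eq_zero_iff two_ne_zero |>.1 ?_⟩
  rw [hy] at hid
  nlinarith [sq_nonneg p.2.2]

lemma snd_snd_eq_of_kappa_eq {p q : ℝ × ℝ × ℝ} (h : kappa p = kappa q) (h₁ : p.1 = q.1)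
    (h₂ : p.2.1 = q.2.1) : p.2.2 = q.2.2 ∨ p.2.2 = q.1 * q.2.1 - q.2.2 := by
  have : (p.2.2 - q.2.2) * (p.2.2 - (q.1 * q.2.1 - q.2.2)) = 0 := by
    simp only [kappa, h₁, h₂] at h
    linear_combination h
  rcases mul_eq_zero.1 this with h | h
  · exact .inl (sub_eq_zero.1 h)
  · exact .inr (sub_eq_zero.1 h)

lemma isClosed_Ek (k : ℝ) : IsClosed (Ek k) := by
  simp only [Ek, ofPred_and]
  refine (isClosed_Icc.preimage (by fun_prop)).inter <|
    (isClosed_Icc.preimage (by fun_prop)).inter <| (isClosed_Icc.preimage (by fun_prop)).inter <|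
      isClosed_eq (by unfold kappa; fun_prop) continuous_const

lemma isCompact_Ek (k : ℝ) : IsCompact (Ek k) :=
  (isCompact_Icc.prod (isCompact_Icc.prod isCompact_Icc)).of_isClosed_subset (isClosed_Ek k)
    fun _ hp ↦ ⟨hp.1, hp.2.1, hp.2.2.1⟩

/-- Conjugation by `swapXY` exchanges `τ_X` and `τ_Y`, so facts about `x`-slices transfer to
`y`-slices. -/
def swapXY : Equiv.Perm (ℝ × ℝ × ℝ) :=
  Function.Involutive.toPerm (fun p ↦ (p.2.1, p.1, p.2.2)) fun _ ↦ rfl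

lemma swapXY_apply (p : ℝ × ℝ × ℝ) : swapXY p = (p.2.1, p.1, p.2.2) := rfl

lemma swapXY_inv : swapXY⁻¹ = swapXY := rfl

lemma swapXY_mul_tauX_mul_swapXY : swapXY * tauX * swapXY = tauY := Equiv.ext fun _ ↦ rfl

lemma swapXY_mul_tauY_mul_swapXY : swapXY * tauY * swapXY = tauX := Equiv.ext fun _ ↦ rfl

lemma swapXY_mem_Ek_iff {k : ℝ} {p : ℝ × ℝ × ℝ} : swapXY p ∈ Ek k ↔ p ∈ Ek k := by
  have : kappa (swapXY p) = kappa p := by simp only [kappa, swapXY_apply]; ring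
  simp only [Ek, mem_ofPred_eq, this]
  exact ⟨fun ⟨hy, hx, hz, hκ⟩ ↦ ⟨hx, hy, hz, hκ⟩, fun ⟨hx, hy, hz, hκ⟩ ↦ ⟨hy, hx, hz, hκ⟩⟩

lemma tauX_mem_Gamma : tauX ∈ Gamma := Subgroup.subset_closure (mem_insert _ _)

lemma tauY_mem_Gamma : tauY ∈ Gamma := Subgroup.subset_closure (mem_insert_of_mem _ rfl)

lemma swapXY_mul_mul_swapXY_mem_Gamma {g : Equiv.Perm (ℝ × ℝ × ℝ)} (hg : g ∈ Gamma) :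
    swapXY * g * swapXY ∈ Gamma := by
  suffices Gamma ≤ Gamma.comap (MulAut.conj swapXY).toMonoidHom from this hg
  refine (Subgroup.closure_le _).2 ?_
  rintro _ (rfl | rfl)
  · simpa [swapXY_inv, swapXY_mul_tauX_mul_swapXY] using tauY_mem_Gamma
  · simpa [swapXY_inv, swapXY_mul_tauY_mul_swapXY] using tauX_mem_Gamma

lemma continuous_of_mem_Gamma {g : Equiv.Perm (ℝ × ℝ × ℝ)} (hg : g ∈ Gamma) : Continuous g := by
  induction hg using Subgroup.closure_induction'' with
  | mem x hx =>
    rcases hx with rfl | rfl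
    · exact (by fun_prop : Continuous fun p : ℝ × ℝ × ℝ ↦ (p.1, p.2.2, p.1 * p.2.2 - p.2.1))
    · exact (by fun_prop : Continuous fun p : ℝ × ℝ × ℝ ↦ (p.2.2, p.2.1, p.2.1 * p.2.2 - p.1))
  | inv_mem x hx =>
    rcases hx with rfl | rfl
    · exact (by fun_prop : Continuous fun p : ℝ × ℝ × ℝ ↦ (p.1, p.1 * p.2.1 - p.2.2, p.2.1))
    · exact (by fun_prop : Continuous fun p : ℝ × ℝ × ℝ ↦ (p.1 * p.2.1 - p.2.2, p.2.1, p.1))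
  | one => exact continuous_id
  | mul x y _ _ hx hy => exact hx.comp hy

lemma mapsTo_Ek_of_mem_Gamma {k : ℝ} (hk : k < 2) {g : Equiv.Perm (ℝ × ℝ × ℝ)}
    (hg : g ∈ Gamma) : MapsTo g (Ek k) (Ek k) := by
  have hswap : MapsTo swapXY (Ek k) (Ek k) := fun _ ↦ swapXY_mem_Ek_iff.2
  have hX : MapsTo tauX (Ek k) (Ek k) := fun ⟨x, y, z⟩ hp ↦ by
    rw [mem_Ek_iff_of_lt_two hk] at hp ⊢
    exact ⟨hp.1, by rw [← hp.2]; change kappa (x, z, x * z - y) = _; simp only [kappa]; ring⟩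
  have hX' : MapsTo ⇑(tauX⁻¹) (Ek k) (Ek k) := fun ⟨x, y, z⟩ hp ↦ by
    rw [mem_Ek_iff_of_lt_two hk] at hp ⊢
    exact ⟨hp.1, by rw [← hp.2]; change kappa (x, x * y - z, y) = _; simp only [kappa]; ring⟩
  induction hg using Subgroup.closure_induction'' with
  | mem x hx =>
    rcases hx with rfl | rfl
    · exact hX
    · rw [← swapXY_mul_tauX_mul_swapXY]
      exact (hswap.comp hX).comp hswap
  | inv_mem x hx =>
    rcases hx with rfl | rfl
    · exact hX'
    · rw [← swapXY_mul_tauX_mul_swapXY, mul_inv_rev, mul_inv_rev, swapXY_inv, ← mul_assoc]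
      exact (hswap.comp hX').comp hswap
  | one => exact mapsTo_id _
  | mul x y _ _ hx hy => exact hx.comp hy

lemma exists_mem_Gamma_sq_lt {k : ℝ} (hk₁ : -2 < k) (hk : k < 2) {q : ℝ × ℝ × ℝ}
    (hq : q ∈ Ek k) : ∃ g ∈ Gamma, (g q).1 ^ 2 < k + 2 ∧ (g q).2.1 ^ 2 < k + 2 := by
  by_cases h₁ : q.1 ^ 2 < k + 2
  · by_cases h₂ : q.2.1 ^ 2 < k + 2
    · exact ⟨1, one_mem _, h₁, h₂⟩
    · obtain ⟨hx, hz⟩ : q.1 = 0 ∧ q.2.2 = 0 :=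
        snd_eq_zero_and_snd_snd_eq_zero hk (swapXY_mem_Ek_iff.2 hq) (not_lt.1 h₂)
      refine ⟨tauX, tauX_mem_Gamma, ?_⟩
      change q.1 ^ 2 < k + 2 ∧ q.2.2 ^ 2 < k + 2
      simp only [hx, hz]
      constructor <;> linarith
  · obtain ⟨hy, hz⟩ := snd_eq_zero_and_snd_snd_eq_zero hk hq (not_lt.1 h₁)
    refine ⟨tauY, tauY_mem_Gamma, ?_⟩
    change q.2.2 ^ 2 < k + 2 ∧ q.2.1 ^ 2 < k + 2
    simp only [hy, hz]
    constructor <;> linarith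

lemma exists_eq_mul_cos_and_eq_mul_sin {u v r : ℝ} (hr : 0 ≤ r) (h : u ^ 2 + v ^ 2 = r ^ 2) :
    ∃ t, u = r * Real.cos t ∧ v = r * Real.sin t := by
  have hnorm : ‖(⟨u, v⟩ : ℂ)‖ = r := by
    rw [Complex.norm_eq_sqrt_sq_add_sq, h, Real.sqrt_sq hr]
  refine ⟨Complex.arg ⟨u, v⟩, ?_, ?_⟩
  · rw [← hnorm, Complex.norm_mul_cos_arg]
  · rw [← hnorm, Complex.norm_mul_sin_arg]

lemma cos_sq_add_cos_sub_sq (t α : ℝ) :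
    Real.cos t ^ 2 + Real.cos (t - α) ^ 2 - 2 * Real.cos α * Real.cos t * Real.cos (t - α) =
      Real.sin α ^ 2 := by
  rw [Real.cos_sub]
  linear_combination Real.sin α ^ 2 * Real.sin_sq_add_cos_sq t
    - Real.cos t ^ 2 * Real.sin_sq_add_cos_sq α

lemma sin_arccos_half_sq {a : ℝ} (ha : a ^ 2 ≤ 4) :
    Real.sin (Real.arccos (a / 2)) ^ 2 = 1 - a ^ 2 / 4 := by
  rw [Real.sin_arccos, Real.sq_sqrt (by nlinarith)]; ring

lemma cos_arccos_half {a : ℝ} (ha : a ^ 2 ≤ 4) : Real.cos (Real.arccos (a / 2)) = a / 2 :=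
  Real.cos_arccos (by nlinarith) (by nlinarith)

def xSlice (k a : ℝ) : Set (ℝ × ℝ × ℝ) := {p ∈ Ek k | p.1 = a}

noncomputable def sliceRadius (k a : ℝ) : ℝ := √((k + 2 - a ^ 2) / (1 - a ^ 2 / 4))

/-- A parametrization of the slice `x = a` in which `τ_X` is the rotation
`t ↦ t - arccos (a / 2)`. -/
noncomputable def slicePoint (k a t : ℝ) : ℝ × ℝ × ℝ :=
  (a, sliceRadius k a * Real.cos t, sliceRadius k a * Real.cos (t - Real.arccos (a / 2)))

lemma sliceRadius_nonneg (k a : ℝ) : 0 ≤ sliceRadius k a := Real.sqrt_nonneg _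

lemma sliceRadius_pos {k a : ℝ} (hak : a ^ 2 < k + 2) (ha : a ^ 2 < 4) : 0 < sliceRadius k a :=
  Real.sqrt_pos.2 (div_pos (by linarith) (by linarith))

lemma sliceRadius_zero (k : ℝ) : sliceRadius k 0 = √(k + 2) := by simp [sliceRadius]

lemma sliceRadius_sq_mul {k a : ℝ} (hak : a ^ 2 ≤ k + 2) (ha : a ^ 2 < 4) :
    sliceRadius k a ^ 2 * (1 - a ^ 2 / 4) = k + 2 - a ^ 2 := by
  rw [sliceRadius, Real.sq_sqrt (div_nonneg (by linarith) (by linarith)),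
    div_mul_cancel₀ _ (by linarith)]

lemma slicePoint_mem_Ek {k a : ℝ} (hk : k < 2) (hak : a ^ 2 ≤ k + 2) (t : ℝ) :
    slicePoint k a t ∈ Ek k := by
  have ha : a ^ 2 < 4 := by linarith
  refine (mem_Ek_iff_of_lt_two hk).2 ⟨ha, ?_⟩
  have key := cos_sq_add_cos_sub_sq t (Real.arccos (a / 2))
  rw [cos_arccos_half ha.le, sin_arccos_half_sq ha.le] at key
  simp only [kappa, slicePoint]
  linear_combination sliceRadius k a ^ 2 * key + sliceRadius_sq_mul hak ha

lemma exists_slicePoint_eq {k : ℝ} (hk : k < 2) {p : ℝ × ℝ × ℝ} (hp : p ∈ Ek k) :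
    ∃ t, slicePoint k p.1 t = p := by
  obtain ⟨x, y, z⟩ := p
  have hx : x ^ 2 < 4 := ((mem_Ek_iff_of_lt_two hk).1 hp).1
  have hρ : sliceRadius k x ^ 2 * (1 - x ^ 2 / 4) = k + 2 - x ^ 2 :=
    sliceRadius_sq_mul (sq_fst_le_of_mem_Ek hp) hx
  have hid : k + 2 - x ^ 2 = (z - x * y / 2) ^ 2 + (1 - x ^ 2 / 4) * y ^ 2 := by
    rw [← hp.2.2.2]; exact kappa_add_two_sub_sq_fst (x, y, z)
  simp only [slicePoint, Real.cos_sub, cos_arccos_half hx.le]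
  have hS := sin_arccos_half_sq hx.le
  generalize Real.sin (Real.arccos (x / 2)) = S at hS ⊢
  have hS0 : S ≠ 0 := by rintro rfl; linarith
  have hv2 : ((z - x * y / 2) / S) ^ 2 * S ^ 2 = (z - x * y / 2) ^ 2 := by
    rw [div_pow, div_mul_cancel₀ _ (pow_ne_zero 2 hS0)]
  obtain ⟨t, hy, hv⟩ := exists_eq_mul_cos_and_eq_mul_sin (u := y) (v := (z - x * y / 2) / S)
    (r := sliceRadius k x) (Real.sqrt_nonneg _) <| by
      apply mul_right_cancel₀ (pow_ne_zero 2 hS0)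
      linear_combination hv2 + (y ^ 2 - sliceRadius k x ^ 2) * hS - hid - hρ
  have hv' : z - x * y / 2 = sliceRadius k x * Real.sin t * S := by
    rw [← hv, div_mul_cancel₀ _ hS0]
  refine ⟨t, Prod.ext rfl (Prod.ext hy.symm ?_)⟩
  linear_combination -(x / 2) * hy - hv'

lemma tauX_slicePoint {k a : ℝ} (ha : a ^ 2 ≤ 4) (t : ℝ) :
    tauX (slicePoint k a t) = slicePoint k a (t - Real.arccos (a / 2)) := by
  set α := Real.arccos (a / 2)
  refine Prod.ext rfl (Prod.ext rfl ?_)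
  change a * (sliceRadius k a * Real.cos (t - α)) - sliceRadius k a * Real.cos t =
    sliceRadius k a * Real.cos (t - α - α)
  have ht : Real.cos t = Real.cos (t - α + α) := by rw [sub_add_cancel]
  rw [ht, Real.cos_add, Real.cos_sub (t - α), cos_arccos_half ha]
  ring

lemma tauX_zpow_slicePoint {k a : ℝ} (ha : a ^ 2 ≤ 4) (j : ℤ) (t : ℝ) :
    (tauX ^ j) (slicePoint k a t) = slicePoint k a (t - j * Real.arccos (a / 2)) := by
  induction j using Int.induction_on generalizing t with
  | zero => simp
  | succ n ih =>
    rw [zpow_add_one, Equiv.Perm.mul_apply, tauX_slicePoint ha, ih]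
    push_cast; ring_nf
  | pred n ih =>
    have hinv : tauX⁻¹ (slicePoint k a t) = slicePoint k a (t + Real.arccos (a / 2)) := by
      rw [Equiv.Perm.inv_eq_iff_eq, tauX_slicePoint ha, add_sub_cancel_right]
    rw [zpow_sub_one, Equiv.Perm.mul_apply, hinv, ih]
    push_cast; ring_nf

lemma slicePoint_add_int_mul_two_pi (k a t : ℝ) (m : ℤ) :
    slicePoint k a (t + m * (2 * π)) = slicePoint k a t := by
  simp only [slicePoint, add_sub_right_comm t, Real.cos_add_int_mul_two_pi]

lemma continuousAt_slicePoint {k a : ℝ} (ha : a ^ 2 < 4) (s : ℝ) :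
    ContinuousAt (fun w : ℝ × ℝ ↦ slicePoint k w.1 w.2) (a, s) := by
  have : 1 - a ^ 2 / 4 ≠ 0 := by linarith
  unfold slicePoint sliceRadius
  fun_prop (disch := assumption)

lemma exists_slicePoint_snd_eq {k a b : ℝ} (hb : |b| ≤ sliceRadius k a) :
    ∃ t, (slicePoint k a t).2.1 = b := by
  refine ⟨Real.arccos (b / sliceRadius k a), ?_⟩
  change sliceRadius k a * Real.cos _ = b
  rcases (sliceRadius_nonneg k a).eq_or_lt with hρ | hρ
  · rw [← hρ] at hb ⊢
    exact (zero_mul _).trans (abs_nonpos_iff.1 hb).symm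
  · obtain ⟨hb₁, hb₂⟩ := abs_le.1 hb
    rw [Real.cos_arccos (by rwa [le_div_iff₀ hρ, neg_one_mul]) (by rwa [div_le_one hρ]),
      mul_div_cancel₀ _ hρ.ne']

lemma exists_int_abs_sub_mul_le (x : ℝ) {g : ℝ} (hg : g ≠ 0) : ∃ n : ℤ, |x - n * g| ≤ |g| / 2 :=
  ⟨round (x / g), calc
    |x - round (x / g) * g| = |x / g - round (x / g)| * |g| := by
      rw [← abs_mul, sub_mul, div_mul_cancel₀ _ hg]
    _ ≤ 1 / 2 * |g| := mul_le_mul_of_nonneg_right (abs_sub_round _) (abs_nonneg _)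
    _ = |g| / 2 := by ring⟩

lemma exists_natCast_mul_sub_mem_closure_pair {β c : ℝ} (hβ : ¬Irrational (β / c)) (hc : c ≠ 0) :
    ∃ N : ℕ, 0 < N ∧ ∀ β', (N : ℝ) * (β' - β) ∈ AddSubgroup.closure {β', c} := by
  obtain ⟨r, hr⟩ := not_not.1 hβ
  refine ⟨r.den, r.den_pos, fun β' ↦ AddSubgroup.mem_closure_pair.2 ⟨r.den, -r.num, ?_⟩⟩
  rw [Rat.cast_def, div_eq_div_iff (by positivity) hc] at hr
  simp only [zsmul_eq_mul, Int.cast_natCast, Int.cast_neg]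
  linear_combination -hr

lemma accPt_Icc {a b x : ℝ} (hab : a < b) (hx : x ∈ Icc a b) : AccPt x (𝓟 (Icc a b)) := by
  rcases hx.2.lt_or_eq with hxb | rfl
  · exact NeBot.mono inferInstance
      (le_inf (nhdsGT_le_nhdsNE x) (le_principal_iff.2 (Icc_mem_nhdsGT_of_mem ⟨hx.1, hxb⟩)))
  · exact NeBot.mono inferInstance
      (le_inf (nhdsLT_le_nhdsNE x) (le_principal_iff.2 (Icc_mem_nhdsLT hab)))

lemma accPt_fst_or_accPt_snd {k : ℝ} {K : Set (ℝ × ℝ × ℝ)} (hK : K ⊆ Ek k) {q : ℝ × ℝ × ℝ}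
    (hq : q ∈ Ek k) (hacc : AccPt q (𝓟 K)) :
    AccPt q.1 (𝓟 (Prod.fst '' K)) ∨ AccPt q.2.1 (𝓟 ((fun p ↦ p.2.1) '' K)) := by
  by_contra! h
  obtain ⟨h₁, h₂⟩ := h
  rw [accPt_iff_frequently, not_frequently] at h₁ h₂
  set q' : ℝ × ℝ × ℝ := (q.1, q.2.1, q.1 * q.2.1 - q.2.2)
  have h₃ : ∀ᶠ p in 𝓝 q, p ≠ q' ∨ q' = q := by
    by_cases hq' : q' = q
    · exact .of_forall fun _ ↦ .inr hq'
    · filter_upwards [eventually_ne_nhds (Ne.symm hq')] with p hp using .inl hp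
  obtain ⟨p, ⟨hpq, hpK⟩, hp₁, hp₂, hp₃⟩ := ((accPt_iff_frequently.1 hacc).and_eventually
    ((continuous_fst.continuousAt.eventually h₁).and
      (((by fun_prop : Continuous fun p : ℝ × ℝ × ℝ ↦ p.2.1).continuousAt.eventually h₂).and
        h₃))).exists
  have e₁ : p.1 = q.1 := by by_contra hne; exact hp₁ ⟨hne, p, hpK, rfl⟩
  have e₂ : p.2.1 = q.2.1 := by by_contra hne; exact hp₂ ⟨hne, p, hpK, rfl⟩
  rcases snd_snd_eq_of_kappa_eq ((hK hpK).2.2.2.trans hq.2.2.2.symm) e₁ e₂ with e₃ | e₃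
  · exact hpq (Prod.ext e₁ (Prod.ext e₂ e₃))
  · rcases hp₃ with hp₃ | hp₃
    · exact hp₃ (Prod.ext e₁ (Prod.ext e₂ e₃))
    · exact hpq (hp₃ ▸ Prod.ext e₁ (Prod.ext e₂ e₃))

structure IsClosedInvariant (k : ℝ) (K : Set (ℝ × ℝ × ℝ)) : Prop where
  isClosed : IsClosed K
  subset_Ek : K ⊆ Ek k
  mapsTo : ∀ g ∈ Gamma, MapsTo g K K

namespace IsClosedInvariant

variable {k : ℝ} {K : Set (ℝ × ℝ × ℝ)}

lemma isCompact (hK : IsClosedInvariant k K) : IsCompact K :=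
  (isCompact_Ek k).of_isClosed_subset hK.isClosed hK.subset_Ek

lemma preimage_swapXY (hK : IsClosedInvariant k K) : IsClosedInvariant k (swapXY ⁻¹' K) where
  isClosed := hK.isClosed.preimage
    (by fun_prop : Continuous fun p : ℝ × ℝ × ℝ ↦ (p.2.1, p.1, p.2.2))
  subset_Ek _ hp := swapXY_mem_Ek_iff.1 (hK.subset_Ek hp)
  mapsTo g hg _ hp := hK.mapsTo _ (swapXY_mul_mul_swapXY_mem_Gamma hg) hp

lemma slicePoint_add_mem (hK : IsClosedInvariant k K) {b t g : ℝ} (h : slicePoint k b t ∈ K)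
    (hg : g ∈ AddSubgroup.closure {Real.arccos (b / 2), 2 * π}) :
    slicePoint k b (t + g) ∈ K := by
  obtain ⟨hb₁, hb₂⟩ : b ∈ Icc (-2 : ℝ) 2 := (hK.subset_Ek h).1
  obtain ⟨j, m, rfl⟩ := AddSubgroup.mem_closure_pair.1 hg
  rw [zsmul_eq_mul, zsmul_eq_mul, ← add_assoc, slicePoint_add_int_mul_two_pi,
    show t + j * Real.arccos (b / 2) = t - ((-j : ℤ) : ℝ) * Real.arccos (b / 2) by push_cast; ring,
    ← tauX_zpow_slicePoint (by nlinarith)]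
  exact hK.mapsTo _ (zpow_mem tauX_mem_Gamma _) h

lemma slicePoint_mem_of_small_rotations (hK : IsClosedInvariant k K) {a : ℝ} (ha : a ^ 2 < 4)
    (h : ∀ δ > 0, ∃ b t, |b - a| < δ ∧ slicePoint k b t ∈ K ∧
      ∃ g ∈ AddSubgroup.closure {Real.arccos (b / 2), 2 * π}, g ≠ 0 ∧ |g| < δ) (s : ℝ) :
    slicePoint k a s ∈ K := by
  rw [← hK.isClosed.closure_eq, Metric.mem_closure_iff]
  intro ε hε
  obtain ⟨δ, hδ, hφ⟩ := Metric.continuousAt_iff.1 (continuousAt_slicePoint (k := k) ha s) ε hε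
  obtain ⟨b, t, hba, hbt, g, hg, hg0, hgδ⟩ := h δ hδ
  obtain ⟨n, hn⟩ := exists_int_abs_sub_mul_le (s - t) hg0
  refine ⟨_, hK.slicePoint_add_mem hbt (zsmul_mem hg n), ?_⟩
  rw [dist_comm]
  refine hφ (x := (b, t + n • g)) ?_
  rw [Prod.dist_eq, Real.dist_eq, Real.dist_eq, zsmul_eq_mul]
  refine max_lt hba ?_
  rw [show t + n * g - s = -(s - t - n * g) by ring, abs_neg]
  linarith

lemma xSlice_subset_of_accPt (hK : IsClosedInvariant k K) (hk : k < 2) {q : ℝ × ℝ × ℝ} (hq : q ∈ K)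
    (hacc : AccPt q.1 (𝓟 (Prod.fst '' K))) : xSlice k q.1 ⊆ K := by
  have hq4 : q.1 ^ 2 < 4 := ((mem_Ek_iff_of_lt_two hk).1 (hK.subset_Ek hq)).1
  rintro p ⟨hp, hp1⟩
  obtain ⟨s, hs⟩ := exists_slicePoint_eq hk hp
  rw [← hs, hp1]
  refine hK.slicePoint_mem_of_small_rotations hq4 (fun δ hδ ↦ ?_) s
  by_cases hirr : Irrational (Real.arccos (q.1 / 2) / (2 * π))
  · obtain ⟨t, ht⟩ := exists_slicePoint_eq hk (hK.subset_Ek hq)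
    obtain ⟨g, hg, hg0, hgδ⟩ := (dense_addSubgroupClosure_pair_iff.2 hirr).exists_mem_open
      isOpen_Ioo (nonempty_Ioo.2 hδ)
    exact ⟨q.1, t, by simpa using hδ, ht ▸ hq, g, hg, hg0.ne', by rwa [abs_of_pos hg0]⟩
  obtain ⟨N, hN, hNmem⟩ := exists_natCast_mul_sub_mem_closure_pair hirr (by positivity)
  have hNδ : 0 < δ / N := by positivity
  have hcont : ∀ᶠ b in 𝓝 q.1, |Real.arccos (b / 2) - Real.arccos (q.1 / 2)| < δ / N := by
    have : ContinuousAt (fun b ↦ Real.arccos (b / 2)) q.1 := by fun_prop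
    simpa [Real.dist_eq] using this.eventually (Metric.ball_mem_nhds _ hNδ)
  have hnear : ∀ᶠ b in 𝓝 q.1, |b - q.1| < δ := by
    filter_upwards [Metric.ball_mem_nhds q.1 hδ] with b hb
    rwa [Metric.mem_ball, Real.dist_eq] at hb
  obtain ⟨b, ⟨hbq, ⟨p', hp'K, rfl⟩⟩, hα, hb⟩ :=
    ((accPt_iff_frequently.1 hacc).and_eventually (hcont.and hnear)).exists
  obtain ⟨t, ht⟩ := exists_slicePoint_eq hk (hK.subset_Ek hp'K)
  refine ⟨p'.1, t, hb, ht ▸ hp'K, _, hNmem _, mul_ne_zero (by positivity) ?_, ?_⟩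
  · obtain ⟨hp₁, hp₂⟩ := (hK.subset_Ek hp'K).1
    obtain ⟨hq₁, hq₂⟩ := (hK.subset_Ek hq).1
    refine sub_ne_zero.2 fun h ↦ hbq ?_
    have := Real.arccos_injOn ⟨by linarith, by linarith⟩ ⟨by linarith, by linarith⟩ h
    linarith
  · rw [abs_mul, Nat.abs_cast]
    calc (N : ℝ) * _ < N * (δ / N) := by gcongr
      _ = δ := by field_simp

lemma xSlice_subset_preimage_swapXY (hK : IsClosedInvariant k K) (hk : k < 2) {a : ℝ}
    (ha : a ^ 2 < k + 2) (hslice : xSlice k a ⊆ K) {b : ℝ} (hb : |b| ≤ sliceRadius k a) :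
    xSlice k b ⊆ swapXY ⁻¹' K := by
  have hρ := sliceRadius_pos ha (by linarith)
  have hIcc : Icc (-sliceRadius k a) (sliceRadius k a) ⊆ Prod.fst '' (swapXY ⁻¹' K) := by
    intro c hc
    obtain ⟨t, ht⟩ := exists_slicePoint_snd_eq (abs_le.2 hc)
    exact ⟨swapXY (slicePoint k a t), hslice ⟨slicePoint_mem_Ek hk ha.le t, rfl⟩, ht⟩
  obtain ⟨p, hp, rfl⟩ := hIcc (abs_le.1 hb)
  exact hK.preimage_swapXY.xSlice_subset_of_accPt hk hp
    ((accPt_Icc (by linarith) (abs_le.1 hb)).mono (principal_mono.2 hIcc))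

lemma Ek_subset_of_accPt (hK : IsClosedInvariant k K) (hk : k < 2) {q : ℝ × ℝ × ℝ} (hq : q ∈ K)
    (hq₁ : q.1 ^ 2 < k + 2) (hacc : AccPt q.1 (𝓟 (Prod.fst '' K))) : Ek k ⊆ K := by
  have hk₀ : (0 : ℝ) ^ 2 < k + 2 := by nlinarith
  have h₀ : xSlice k 0 ⊆ swapXY ⁻¹' K := hK.xSlice_subset_preimage_swapXY hk hq₁
    (hK.xSlice_subset_of_accPt hk hq hacc) (by simpa using sliceRadius_nonneg k q.1)
  intro p hp
  refine hK.preimage_swapXY.xSlice_subset_preimage_swapXY hk hk₀ h₀ ?_ ⟨hp, rfl⟩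
  rw [sliceRadius_zero]
  exact Real.abs_le_sqrt (sq_fst_le_of_mem_Ek hp)

lemma exists_accPt (hK : IsClosedInvariant k K) (hk₁ : -2 < k) (hk : k < 2) (hinf : K.Infinite) :
    ∃ q ∈ K, AccPt q (𝓟 K) ∧ q.1 ^ 2 < k + 2 ∧ q.2.1 ^ 2 < k + 2 := by
  obtain ⟨q, hqK, hacc⟩ := hinf.exists_accPt_of_subset_isCompact hK.isCompact subset_rfl
  obtain ⟨g, hg, hgq⟩ := exists_mem_Gamma_sq_lt hk₁ hk (hK.subset_Ek hqK)
  refine ⟨g q, hK.mapsTo g hg hqK, ?_, hgq⟩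
  have := hacc.map (continuous_of_mem_Gamma hg).continuousAt g.injective
  rw [map_principal] at this
  exact this.mono (principal_mono.2 (hK.mapsTo g hg).image_subset)

lemma Ek_subset_of_infinite (hK : IsClosedInvariant k K) (hk₁ : -2 < k) (hk : k < 2)
    (hinf : K.Infinite) : Ek k ⊆ K := by
  obtain ⟨q, hqK, hacc, hq₁, hq₂⟩ := hK.exists_accPt hk₁ hk hinf
  rcases accPt_fst_or_accPt_snd hK.subset_Ek (hK.subset_Ek hqK) hacc with h | h
  · exact hK.Ek_subset_of_accPt hk hqK hq₁ h
  · have hswap : Prod.fst '' (swapXY ⁻¹' K) = (fun p ↦ p.2.1) '' K := by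
      ext x
      constructor <;> rintro ⟨p, hp, rfl⟩ <;> exact ⟨swapXY p, hp, rfl⟩
    intro p hp
    exact hK.preimage_swapXY.Ek_subset_of_accPt hk (q := swapXY q) hqK hq₂ (hswap ▸ h)
      (swapXY_mem_Ek_iff.2 hp)

end IsClosedInvariant

lemma isClosedInvariant_closure_gammaOrbit {k : ℝ} (hk : k < 2) {p : ℝ × ℝ × ℝ}
    (hp : p ∈ Ek k) : IsClosedInvariant k (closure (gammaOrbit p)) where
  isClosed := isClosed_closure
  subset_Ek := closure_minimal (by rintro _ ⟨g, hg, rfl⟩; exact mapsTo_Ek_of_mem_Gamma hk hg hp)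
    (isClosed_Ek k)
  mapsTo g hg := by
    refine MapsTo.closure ?_ (continuous_of_mem_Gamma hg)
    rintro _ ⟨h, hh, rfl⟩
    exact ⟨g * h, mul_mem hg hh, rfl⟩

/-- If `(x₀,y₀,z₀) ∈ E_k` (`−2 < k < 2`) has infinite `Γ`-orbit, then its `Γ`-orbit is dense
in `E_k`. -/
theorem infinite_orbit_dense (k : ℝ) (hk₁ : -2 < k) (hk₂ : k < 2)
    (x₀ y₀ z₀ : ℝ) (hmem : (x₀, y₀, z₀) ∈ Ek k)
    (hinf : (gammaOrbit (x₀, y₀, z₀)).Infinite) :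
    Ek k ⊆ closure (gammaOrbit (x₀, y₀, z₀)) :=
  (isClosedInvariant_closure_gammaOrbit hk₂ hmem).Ek_subset_of_infinite hk₁ hk₂
    (hinf.mono subset_closure)
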